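/- Correctness of the marked ε-NFA for a regular expression with tests: For an ω-word w = w₀w₁w₂⋯ and n ≥ 0, the following are equivalent: (1) the Thompson automaton A_r has an accepting run q₀q₁⋯q_n on w₀⋯w_{n-1} with ε-paths π_i (0 ≤ i ≤ n) such that the suffix w_i w_{i+1}⋯ satisfies the conjunction of all test markings visited along π_i, for every i; (2) (0, n) ∈ R(r, w). -/

import Mathlib

/-!
Call a run of a marked automaton checked if every state it leaves satisfies its test marking at
the current position. A checked run of the automaton of a compound expression that starts inside
the copy of a subautomaton either stays there or leaves it once, along a Thompson ε-edge out of a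
final state. Hence acceptance is compositional: `A_{r₀+r₁}` accepts `[m, n]` iff one of `A_{rᵢ}`
does, `A_{r₀;r₁}` iff some split point `k` works, and `A_{r*}` iff `[m, n]` is a chain of
intervals accepted by `A_r`, the ε-edges from final states back to the start of the copy of `A_r`
making the loop. Induction on `r` then identifies acceptance with `R(r, w)`, and cutting a run at
its letter moves gives the ε-paths `π_i`.
-/

namespace PLDLPaper

/-- Propositional formulas over atomic propositions `P`. -/
inductive PropF (P : Type) where
  | tru : PropF P
  | fls : PropF P
  | atom : P → PropF P
  | natom : P → PropF P
  | conj : PropF P → PropF P → PropF P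
  | disj : PropF P → PropF P → PropF P

def PropF.eval {P : Type} (A : P → Prop) : PropF P → Prop
  | .tru => True
  | .fls => False
  | .atom p => A p
  | .natom p => ¬ A p
  | .conj φ ψ => φ.eval A ∧ ψ.eval A
  | .disj φ ψ => φ.eval A ∨ ψ.eval A

mutual
/-- PLDL formulas (in negation normal form) over atomic propositions `P`
and variables `V`, extended with the fresh coloring proposition `p`
(`colp`/`colnp`) and the changepoint-bounded operators of LDL_cp. -/
inductive Frm (P V : Type) where
  | pos : P → Frm P V
  | neg : P → Frm P V
  | colp : Frm P V
  | colnp : Frm P V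
  | and : Frm P V → Frm P V → Frm P V
  | or : Frm P V → Frm P V → Frm P V
  | dia : RE P V → Frm P V → Frm P V
  | box : RE P V → Frm P V → Frm P V
  | diaLe : RE P V → V → Frm P V → Frm P V
  | boxLe : RE P V → V → Frm P V → Frm P V
  | diaCp : RE P V → Frm P V → Frm P V
  | boxCp : RE P V → Frm P V → Frm P V
/-- Regular expressions with tests. -/
inductive RE (P V : Type) where
  | prop : PropF P → RE P V
  | test : Frm P V → RE P V
  | plus : RE P V → RE P V → RE P V
  | comp : RE P V → RE P V → RE P V
  | star : RE P V → RE P V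
end

/-- `n` is a changepoint of the color sequence `c`. -/
def Changepoint (c : ℕ → Prop) (n : ℕ) : Prop :=
  n = 0 ∨ ¬ (c (n - 1) ↔ c n)

/-- The infix at positions `n, …, n + j - 1` contains at most one changepoint. -/
def AtMostOneCP (c : ℕ → Prop) (n j : ℕ) : Prop :=
  ∀ m₁ m₂, n ≤ m₁ → m₁ < n + j → n ≤ m₂ → m₂ < n + j →
    Changepoint c m₁ → Changepoint c m₂ → m₁ = m₂

mutual
/-- Satisfaction `(w, n, α) ⊨ φ`; the color of position `n` (truth value of the
fresh proposition `p`) is `c n`. -/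
def Sat {P V : Type} (w : ℕ → P → Prop) (c : ℕ → Prop) (α : V → ℕ) :
    Frm P V → ℕ → Prop
  | .pos p, n => w n p
  | .neg p, n => ¬ w n p
  | .colp, n => c n
  | .colnp, n => ¬ c n
  | .and φ ψ, n => Sat w c α φ n ∧ Sat w c α ψ n
  | .or φ ψ, n => Sat w c α φ n ∨ Sat w c α ψ n
  | .dia r ψ, n => ∃ j, Match w c α r n (n + j) ∧ Sat w c α ψ (n + j)
  | .box r ψ, n => ∀ j, Match w c α r n (n + j) → Sat w c α ψ (n + j)
  | .diaLe r z ψ, n => ∃ j, j ≤ α z ∧ Match w c α r n (n + j) ∧ Sat w c α ψ (n + j)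
  | .boxLe r z ψ, n => ∀ j, j ≤ α z → Match w c α r n (n + j) → Sat w c α ψ (n + j)
  | .diaCp r ψ, n => ∃ j, Match w c α r n (n + j) ∧ AtMostOneCP c n j ∧ Sat w c α ψ (n + j)
  | .boxCp r ψ, n => ∀ j, Match w c α r n (n + j) → AtMostOneCP c n j → Sat w c α ψ (n + j)
/-- The match relation `R(r, w, α)`. -/
def Match {P V : Type} (w : ℕ → P → Prop) (c : ℕ → Prop) (α : V → ℕ) :
    RE P V → ℕ → ℕ → Prop
  | .prop φ, m, n => n = m + 1 ∧ φ.eval (w m)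
  | .test ψ, m, n => n = m ∧ Sat w c α ψ m
  | .plus r₀ r₁, m, n => Match w c α r₀ m n ∨ Match w c α r₁ m n
  | .comp r₀ r₁, m, n => ∃ k, Match w c α r₀ m k ∧ Match w c α r₁ k n
  | .star r, m, n => ∃ (k : ℕ) (f : ℕ → ℕ), f 0 = m ∧ f k = n ∧
      ∀ i, i < k → Match w c α r (f i) (f (i + 1))
end

variable {P V : Type}

mutual
/-- Size of a formula. -/
def Frm.size : Frm P V → ℕ
  | .pos _ => 1
  | .neg _ => 1
  | .colp => 1
  | .colnp => 1
  | .and φ ψ => 1 + φ.size + ψ.size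
  | .or φ ψ => 1 + φ.size + ψ.size
  | .dia r ψ => 1 + r.size + ψ.size
  | .box r ψ => 1 + r.size + ψ.size
  | .diaLe r _ ψ => 1 + r.size + ψ.size
  | .boxLe r _ ψ => 1 + r.size + ψ.size
  | .diaCp r ψ => 1 + r.size + ψ.size
  | .boxCp r ψ => 1 + r.size + ψ.size
/-- Size (length) of a regular expression. -/
def RE.size : RE P V → ℕ
  | .prop _ => 1
  | .test ψ => 1 + ψ.size
  | .plus r₀ r₁ => 1 + r₀.size + r₁.size
  | .comp r₀ r₁ => 1 + r₀.size + r₁.size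
  | .star r => 1 + r.size
end

mutual
/-- Variables parameterizing diamond operators. -/
def Frm.dvars [DecidableEq V] : Frm P V → Finset V
  | .pos _ => ∅
  | .neg _ => ∅
  | .colp => ∅
  | .colnp => ∅
  | .and φ ψ => φ.dvars ∪ ψ.dvars
  | .or φ ψ => φ.dvars ∪ ψ.dvars
  | .dia r ψ => r.dvars ∪ ψ.dvars
  | .box r ψ => r.dvars ∪ ψ.dvars
  | .diaLe r z ψ => insert z (r.dvars ∪ ψ.dvars)
  | .boxLe r _ ψ => r.dvars ∪ ψ.dvars
  | .diaCp r ψ => r.dvars ∪ ψ.dvars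
  | .boxCp r ψ => r.dvars ∪ ψ.dvars
def RE.dvars [DecidableEq V] : RE P V → Finset V
  | .prop _ => ∅
  | .test ψ => ψ.dvars
  | .plus r₀ r₁ => r₀.dvars ∪ r₁.dvars
  | .comp r₀ r₁ => r₀.dvars ∪ r₁.dvars
  | .star r => r.dvars
end

mutual
/-- Variables parameterizing box operators. -/
def Frm.bvars [DecidableEq V] : Frm P V → Finset V
  | .pos _ => ∅
  | .neg _ => ∅
  | .colp => ∅
  | .colnp => ∅
  | .and φ ψ => φ.bvars ∪ ψ.bvars
  | .or φ ψ => φ.bvars ∪ ψ.bvars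
  | .dia r ψ => r.bvars ∪ ψ.bvars
  | .box r ψ => r.bvars ∪ ψ.bvars
  | .diaLe r _ ψ => r.bvars ∪ ψ.bvars
  | .boxLe r z ψ => insert z (r.bvars ∪ ψ.bvars)
  | .diaCp r ψ => r.bvars ∪ ψ.bvars
  | .boxCp r ψ => r.bvars ∪ ψ.bvars
def RE.bvars [DecidableEq V] : RE P V → Finset V
  | .prop _ => ∅
  | .test ψ => ψ.bvars
  | .plus r₀ r₁ => r₀.bvars ∪ r₁.bvars
  | .comp r₀ r₁ => r₀.bvars ∪ r₁.bvars
  | .star r => r.bvars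
end

mutual
/-- The formula contains no changepoint-bounded operators. -/
def Frm.noCp : Frm P V → Prop
  | .pos _ => True
  | .neg _ => True
  | .colp => True
  | .colnp => True
  | .and φ ψ => φ.noCp ∧ ψ.noCp
  | .or φ ψ => φ.noCp ∧ ψ.noCp
  | .dia r ψ => r.noCp ∧ ψ.noCp
  | .box r ψ => r.noCp ∧ ψ.noCp
  | .diaLe r _ ψ => r.noCp ∧ ψ.noCp
  | .boxLe r _ ψ => r.noCp ∧ ψ.noCp
  | .diaCp _ _ => False
  | .boxCp _ _ => False
def RE.noCp : RE P V → Prop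
  | .prop _ => True
  | .test ψ => ψ.noCp
  | .plus r₀ r₁ => r₀.noCp ∧ r₁.noCp
  | .comp r₀ r₁ => r₀.noCp ∧ r₁.noCp
  | .star r => r.noCp
end

mutual
/-- The formula does not mention the fresh coloring proposition `p`. -/
def Frm.noCol : Frm P V → Prop
  | .pos _ => True
  | .neg _ => True
  | .colp => False
  | .colnp => False
  | .and φ ψ => φ.noCol ∧ ψ.noCol
  | .or φ ψ => φ.noCol ∧ ψ.noCol
  | .dia r ψ => r.noCol ∧ ψ.noCol
  | .box r ψ => r.noCol ∧ ψ.noCol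
  | .diaLe r _ ψ => r.noCol ∧ ψ.noCol
  | .boxLe r _ ψ => r.noCol ∧ ψ.noCol
  | .diaCp r ψ => r.noCol ∧ ψ.noCol
  | .boxCp r ψ => r.noCol ∧ ψ.noCol
def RE.noCol : RE P V → Prop
  | .prop _ => True
  | .test ψ => ψ.noCol
  | .plus r₀ r₁ => r₀.noCol ∧ r₁.noCol
  | .comp r₀ r₁ => r₀.noCol ∧ r₁.noCol
  | .star r => r.noCol
end

/-- A genuine PLDL formula: no changepoint-bounded operators and no
occurrence of the fresh proposition `p`. -/
def IsPLDL (φ : Frm P V) : Prop := φ.noCp ∧ φ.noCol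

/-- Well-formedness: no variable parameterizes both a diamond and a box. -/
def WellFormed [DecidableEq V] (φ : Frm P V) : Prop :=
  ∀ z, z ∈ φ.dvars → z ∉ φ.bvars

/-- Dualization: the negation of a formula, pushing negations to atoms. -/
def Frm.not : Frm P V → Frm P V
  | .pos p => .neg p
  | .neg p => .pos p
  | .colp => .colnp
  | .colnp => .colp
  | .and φ ψ => .or φ.not ψ.not
  | .or φ ψ => .and φ.not ψ.not
  | .dia r ψ => .box r ψ.not
  | .box r ψ => .dia r ψ.not
  | .diaLe r z ψ => .boxLe r z ψ.not
  | .boxLe r z ψ => .diaLe r z ψ.not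
  | .diaCp r ψ => .boxCp r ψ.not
  | .boxCp r ψ => .diaCp r ψ.not

mutual
/-- `rel φ`: replace every parameterized operator by the corresponding
changepoint-bounded operator. -/
def Frm.rel : Frm P V → Frm P V
  | .pos p => .pos p
  | .neg p => .neg p
  | .colp => .colp
  | .colnp => .colnp
  | .and φ ψ => .and φ.rel ψ.rel
  | .or φ ψ => .or φ.rel ψ.rel
  | .dia r ψ => .dia r.rel ψ.rel
  | .box r ψ => .box r.rel ψ.rel
  | .diaLe r _ ψ => .diaCp r.rel ψ.rel
  | .boxLe r _ ψ => .boxCp r.rel ψ.rel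
  | .diaCp r ψ => .diaCp r.rel ψ.rel
  | .boxCp r ψ => .boxCp r.rel ψ.rel
def RE.rel : RE P V → RE P V
  | .prop φ => .prop φ
  | .test ψ => .test ψ.rel
  | .plus r₀ r₁ => .plus r₀.rel r₁.rel
  | .comp r₀ r₁ => .comp r₀.rel r₁.rel
  | .star r => .star r.rel
end

/-- `θ_∞p = [tt*]⟨tt*⟩p`: the fresh proposition `p` holds infinitely often. -/
def thetaInfP : Frm P V := .box (.star (.prop .tru)) (.dia (.star (.prop .tru)) .colp)

/-- `θ_∞¬p`. -/
def thetaInfNP : Frm P V := .box (.star (.prop .tru)) (.dia (.star (.prop .tru)) .colnp)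

/-- `c(φ) = rel(φ) ∧ θ_∞p ∧ θ_∞¬p`. -/
def cFrm (φ : Frm P V) : Frm P V := .and φ.rel (.and thetaInfP thetaInfNP)

/-- `[i, j)` is a block of the coloring `c`: `i` and `j` are consecutive
changepoints. -/
def IsBlock (c : ℕ → Prop) (i j : ℕ) : Prop :=
  i < j ∧ Changepoint c i ∧ Changepoint c j ∧
    ∀ m, i < m → m < j → ¬ Changepoint c m

/-- Infinitely many changepoints. -/
def InfCP (c : ℕ → Prop) : Prop := ∀ N, ∃ n, N < n ∧ Changepoint c n

/-- Every block has length at most `k` (and there are infinitely many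
changepoints). -/
def kBounded (c : ℕ → Prop) (k : ℕ) : Prop :=
  InfCP c ∧ ∀ i j, IsBlock c i j → j - i ≤ k

/-- Infinitely many changepoints and every block has length at least `k`. -/
def kSpaced (c : ℕ → Prop) (k : ℕ) : Prop :=
  InfCP c ∧ ∀ i j, IsBlock c i j → k ≤ j - i

/-- The states of the Thompson automaton `A_r` of a regular expression `r`. -/
inductive TState (P V : Type) : RE P V → Type where
  | propInit (φ : PropF P) : TState P V (.prop φ)
  | propFin (φ : PropF P) : TState P V (.prop φ)
  | testInit (ψ : Frm P V) : TState P V (.test ψ)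
  | testFin (ψ : Frm P V) : TState P V (.test ψ)
  | plusInit (r₀ r₁ : RE P V) : TState P V (.plus r₀ r₁)
  | plusFin (r₀ r₁ : RE P V) : TState P V (.plus r₀ r₁)
  | plusL : {r₀ r₁ : RE P V} → TState P V r₀ → TState P V (.plus r₀ r₁)
  | plusR : {r₀ r₁ : RE P V} → TState P V r₁ → TState P V (.plus r₀ r₁)
  | compL : {r₀ r₁ : RE P V} → TState P V r₀ → TState P V (.comp r₀ r₁)
  | compR : {r₀ r₁ : RE P V} → TState P V r₁ → TState P V (.comp r₀ r₁)
  | starInit (r : RE P V) : TState P V (.star r)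
  | starFin (r : RE P V) : TState P V (.star r)
  | starIn : {r : RE P V} → TState P V r → TState P V (.star r)

variable {P V : Type}

/-- Initial state of `A_r`. -/
def tInit : (r : RE P V) → TState P V r
  | .prop φ => .propInit φ
  | .test ψ => .testInit ψ
  | .plus r₀ r₁ => .plusInit r₀ r₁
  | .comp r₀ _ => .compL (tInit r₀)
  | .star r => .starInit r

/-- Final states of `A_r`. -/
def tFinal : (r : RE P V) → TState P V r → Prop
  | .prop _, .propFin _ => True
  | .prop _, _ => False
  | .test _, .testFin _ => True
  | .test _, _ => False
  | .plus _ _, .plusFin _ _ => True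
  | .plus _ _, _ => False
  | .comp _ r₁, .compR s => tFinal r₁ s
  | .comp _ _, _ => False
  | .star _, .starFin _ => True
  | .star _, _ => False

/-- Letter-labeled transitions of `A_r`. -/
def tStep : (r : RE P V) → TState P V r → (P → Prop) → TState P V r → Prop
  | .prop φ, .propInit _, a, q' => q' = .propFin φ ∧ PropF.eval a φ
  | .prop _, _, _, _ => False
  | .test _, _, _, _ => False
  | .plus r₀ _, .plusL s, a, q' =>
      match q' with | .plusL s' => tStep r₀ s a s' | _ => False
  | .plus _ r₁, .plusR s, a, q' =>
      match q' with | .plusR s' => tStep r₁ s a s' | _ => False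
  | .plus _ _, _, _, _ => False
  | .comp r₀ _, .compL s, a, q' =>
      match q' with | .compL s' => tStep r₀ s a s' | _ => False
  | .comp _ r₁, .compR s, a, q' =>
      match q' with | .compR s' => tStep r₁ s a s' | _ => False
  | .star r, .starIn s, a, q' =>
      match q' with | .starIn s' => tStep r s a s' | _ => False
  | .star _, _, _, _ => False

/-- ε-transitions of `A_r` (Thompson construction). -/
def tEps : (r : RE P V) → TState P V r → TState P V r → Prop
  | .prop _, _, _ => False
  | .test ψ, .testInit _, q' => q' = .testFin ψ
  | .test _, _, _ => False
  | .plus r₀ r₁, .plusInit _ _, q' =>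
      q' = .plusL (tInit r₀) ∨ q' = .plusR (tInit r₁)
  | .plus r₀ _, .plusL s, q' =>
      match q' with
      | .plusL s' => tEps r₀ s s'
      | .plusFin _ _ => tFinal r₀ s
      | _ => False
  | .plus _ r₁, .plusR s, q' =>
      match q' with
      | .plusR s' => tEps r₁ s s'
      | .plusFin _ _ => tFinal r₁ s
      | _ => False
  | .plus _ _, .plusFin _ _, _ => False
  | .comp r₀ r₁, .compL s, q' =>
      match q' with
      | .compL s' => tEps r₀ s s'
      | .compR s' => tFinal r₀ s ∧ s' = tInit r₁
  | .comp _ r₁, .compR s, q' =>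
      match q' with | .compR s' => tEps r₁ s s' | _ => False
  | .star r, .starInit _, q' => q' = .starFin r ∨ q' = .starIn (tInit r)
  | .star r, .starIn s, q' =>
      match q' with
      | .starIn s' => tEps r s s' ∨ (tFinal r s ∧ s' = tInit r)
      | .starFin _ => tFinal r s
      | _ => False
  | .star _, .starFin _, _ => False

/-- Marking of states by tests. -/
def tMark : (r : RE P V) → TState P V r → Option (Frm P V)
  | .test ψ, .testInit _ => some ψ
  | .plus r₀ _, .plusL s => tMark r₀ s
  | .plus _ r₁, .plusR s => tMark r₁ s
  | .comp r₀ _, .compL s => tMark r₀ s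
  | .comp _ r₁, .compR s => tMark r₁ s
  | .star r, .starIn s => tMark r s
  | _, _ => none

/-- `l` is an ε-path of `A_r` (nonempty, consecutive states linked by
ε-transitions). -/
def TEpsPath (r : RE P V) (l : List (TState P V r)) : Prop :=
  l ≠ [] ∧ l.Chain' (tEps r)

theorem reflTransGen_iff_exists_seq {α : Type*} {R : α → α → Prop} {a b : α} :
    Relation.ReflTransGen R a b ↔
      ∃ (k : ℕ) (f : ℕ → α), f 0 = a ∧ f k = b ∧ ∀ i, i < k → R (f i) (f (i + 1)) := by
  constructor
  · intro h
    induction h using Relation.ReflTransGen.head_induction_on with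
    | refl => exact ⟨0, fun _ => b, rfl, rfl, by simp⟩
    | @head a c hac _ ih =>
      obtain ⟨k, f, rfl, rfl, hf⟩ := ih
      refine ⟨k + 1, fun | 0 => a | i + 1 => f i, rfl, rfl, ?_⟩
      rintro (_ | i) hi
      exacts [hac, hf i (by omega)]
  · rintro ⟨k, f, rfl, rfl, hf⟩
    induction k generalizing f with
    | zero => rfl
    | succ k ih =>
      exact .head (hf 0 (by omega)) (ih (fun i => f (i + 1)) fun i hi => hf (i + 1) (by omega))

section Run

variable {S : Type*} (E : S → S → Prop) (T : S → ℕ → S → Prop) (ok : S → ℕ → Prop)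

/-- `Run E T ok q m q' n`: from state `q` at position `m` the automaton reaches `q'` at position
`n`, by ε-moves `E` and letter moves `T q m q'` (reading the letter at `m`), and every state it
leaves at position `i` satisfies `ok · i`. -/
inductive Run : S → ℕ → S → ℕ → Prop
  | refl (q : S) (m : ℕ) : Run q m q m
  | eps {q q' q'' : S} {m n : ℕ} : E q q' → ok q m → Run q' m q'' n → Run q m q'' n
  | step {q q' q'' : S} {m n : ℕ} :
      T q m q' → ok q m → Run q' (m + 1) q'' n → Run q m q'' n

variable {E T ok}

namespace Run

theorem trans {a b d : S} {m k n : ℕ} (h₁ : Run E T ok a m b k) (h₂ : Run E T ok b k d n) :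
    Run E T ok a m d n := by
  induction h₁ with
  | refl => exact h₂
  | eps he ho _ ih => exact .eps he ho (ih h₂)
  | step ht ho _ ih => exact .step ht ho (ih h₂)

theorem le {a b : S} {m n : ℕ} (h : Run E T ok a m b n) : m ≤ n := by
  induction h <;> omega

theorem eq_of_stuck {a b : S} {m n : ℕ} (h : Run E T ok a m b n)
    (hE : ∀ y, ¬ E a y) (hT : ∀ y, ¬ T a m y) : b = a ∧ n = m := by
  cases h with
  | refl => exact ⟨rfl, rfl⟩
  | eps he => exact (hE _ he).elim
  | step ht => exact (hT _ ht).elim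

variable {S' : Type*} {E' : S' → S' → Prop} {T' : S' → ℕ → S' → Prop} {ok' : S' → ℕ → Prop}

theorem map (f : S → S') (hE : ∀ {a b}, E a b → E' (f a) (f b))
    (hT : ∀ {a m b}, T a m b → T' (f a) m (f b)) (hok : ∀ {a m}, ok a m → ok' (f a) m)
    {a b : S} {m n : ℕ} (h : Run E T ok a m b n) : Run E' T' ok' (f a) m (f b) n := by
  induction h with
  | refl => exact .refl _ _
  | eps he ho _ ih => exact .eps (hE he) (hok ho) ih
  | step ht ho _ ih => exact .step (hT ht) (hok ho) ih

/-- A run that starts in the image of `f` stays there, or leaves it once along an exit edge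
`X`. -/
theorem exit_of_map (f : S → S') (X : S → S' → Prop)
    (hE : ∀ {s y}, E' (f s) y → (∃ s', y = f s' ∧ E s s') ∨ X s y)
    (hT : ∀ {s m y}, T' (f s) m y → ∃ s', y = f s' ∧ T s m s')
    (hok : ∀ {s m}, ok' (f s) m → ok s m) {s : S} {y : S'} {m n : ℕ}
    (h : Run E' T' ok' (f s) m y n) :
    (∃ s', y = f s' ∧ Run E T ok s m s' n) ∨
      ∃ s' x k, Run E T ok s m s' k ∧ X s' x ∧ Run E' T' ok' x k y n := by
  generalize hq : f s = q at h
  induction h generalizing s with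
  | refl => exact .inl ⟨s, hq.symm, .refl _ _⟩
  | eps he ho hr ih =>
    subst hq
    rcases hE he with ⟨s₂, rfl, he₀⟩ | hx
    · rcases ih rfl with ⟨s', rfl, h'⟩ | ⟨s', x, k, h', hx, hr'⟩
      · exact .inl ⟨s', rfl, .eps he₀ (hok ho) h'⟩
      · exact .inr ⟨s', x, k, .eps he₀ (hok ho) h', hx, hr'⟩
    · exact .inr ⟨s, _, _, .refl _ _, hx, hr⟩
  | step ht ho _ ih =>
    subst hq
    obtain ⟨s₂, rfl, ht₀⟩ := hT ht
    rcases ih rfl with ⟨s', rfl, h'⟩ | ⟨s', x, k, h', hx, hr'⟩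
    · exact .inl ⟨s', rfl, .step ht₀ (hok ho) h'⟩
    · exact .inr ⟨s', x, k, .step ht₀ (hok ho) h', hx, hr'⟩

theorem exit_of_map_of_stuck (f : S → S') (X : S → S' → Prop)
    (hE : ∀ {s y}, E' (f s) y → (∃ s', y = f s' ∧ E s s') ∨ X s y)
    (hT : ∀ {s m y}, T' (f s) m y → ∃ s', y = f s' ∧ T s m s')
    (hok : ∀ {s m}, ok' (f s) m → ok s m)
    (hX : ∀ {s x}, X s x → (∀ z, ¬ E' x z) ∧ ∀ m z, ¬ T' x m z) {s : S} {y : S'} {m n : ℕ}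
    (h : Run E' T' ok' (f s) m y n) :
    (∃ s', y = f s' ∧ Run E T ok s m s' n) ∨ ∃ s', Run E T ok s m s' n ∧ X s' y := by
  rcases exit_of_map f X hE hT hok h with h | ⟨s', x, k, h₀, hx, h₁⟩
  · exact .inl h
  · obtain ⟨rfl, rfl⟩ := h₁.eq_of_stuck (hX hx).1 ((hX hx).2 k)
    exact .inr ⟨s', h₀, hx⟩

theorem of_map (f : S → S')
    (hE : ∀ {s y}, E' (f s) y → ∃ s', y = f s' ∧ E s s')
    (hT : ∀ {s m y}, T' (f s) m y → ∃ s', y = f s' ∧ T s m s')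
    (hok : ∀ {s m}, ok' (f s) m → ok s m) {s : S} {y : S'} {m n : ℕ}
    (h : Run E' T' ok' (f s) m y n) : ∃ s', y = f s' ∧ Run E T ok s m s' n := by
  rcases exit_of_map f (fun _ _ => False) (fun he => .inl (hE he)) hT hok h with
    h | ⟨_, _, _, _, ⟨⟩, _⟩
  exact h

theorem of_isChain {l : List S} {a b : S} {m : ℕ} (hl : l.IsChain E) (ha : l.head? = some a)
    (hb : l.getLast? = some b) (hok : ∀ s ∈ l, ok s m) : Run E T ok a m b m := by
  induction l generalizing a with
  | nil => simp at ha
  | cons x t ih =>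
    obtain rfl : x = a := by simpa using ha
    cases t with
    | nil =>
      obtain rfl : x = b := by simpa using hb
      exact .refl _ _
    | cons y t =>
      rw [List.isChain_cons_cons] at hl
      exact .eps hl.1 (hok x (by simp))
        (ih hl.2 rfl (by simpa using hb) fun s hs => hok s (by simp [hs]))

theorem exists_isChain_head {a b : S} {m n : ℕ} (h : Run E T ok a m b n) (hb : ok b n) :
    ∃ (l : List S) (c : S), l.IsChain E ∧ l.head? = some a ∧ l.getLast? = some c ∧
      (∀ s ∈ l, ok s m) ∧ (c = b ∧ n = m ∨ ∃ d, T c m d ∧ Run E T ok d (m + 1) b n) := by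
  induction h with
  | refl q m => exact ⟨[q], q, .singleton q, rfl, rfl, by simpa using hb, .inl ⟨rfl, rfl⟩⟩
  | @eps q q' _ _ _ he ho _ ih =>
    obtain ⟨_ | ⟨x, l⟩, c, hl, hhead, hlast, hok, hrest⟩ := ih hb
    · simp at hhead
    obtain rfl : x = q' := by simpa using hhead
    refine ⟨q :: x :: l, c, .cons_cons he hl, rfl, ?_, ?_, hrest⟩
    · rwa [List.getLast?_cons_cons]
    · simpa [ho] using hok
  | @step q q' _ _ _ ht ho hr _ =>
    exact ⟨[q], q, .singleton q, rfl, rfl, by simpa using ho, .inr ⟨q', ht, hr⟩⟩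

end Run

variable (E T ok) in
/-- The shape of a run in the statement: `π i` is the ε-path `π_i` followed at position `i`,
from `q i` to the source of the `i`-th letter move (to `b` for `i = n`). -/
def IsSegmentation (q : ℕ → S) (π : ℕ → List S) (m n : ℕ) (b : S) : Prop :=
  (∀ i, m ≤ i → i ≤ n → (π i).IsChain E ∧ (π i).head? = some (q i) ∧ ∀ s ∈ π i, ok s i) ∧
  (∀ i, m ≤ i → i < n → ∃ q', (π i).getLast? = some q' ∧ T q' i (q (i + 1))) ∧
  (π n).getLast? = some b

theorem IsSegmentation.run {q : ℕ → S} {π : ℕ → List S} {m n : ℕ} {b : S}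
    (h : IsSegmentation E T ok q π m n b) (hmn : m ≤ n) : Run E T ok (q m) m b n := by
  obtain ⟨hπ, hT, hlast⟩ := h
  obtain ⟨hl, hhead, hok⟩ := hπ m le_rfl hmn
  rcases hmn.eq_or_lt with rfl | hlt
  · exact .of_isChain hl hhead hlast hok
  · obtain ⟨q', hq', ht⟩ := hT m le_rfl hlt
    have h' : IsSegmentation E T ok q π (m + 1) n b :=
      ⟨fun i hi hin => hπ i (by omega) hin, fun i hi hin => hT i (by omega) hin, hlast⟩
    exact (Run.of_isChain hl hhead hq' hok).trans
      (.step ht (hok q' (List.mem_of_getLast? hq')) (h'.run hlt))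
termination_by n - m

theorem Run.exists_isSegmentation {a b : S} {m n : ℕ} (h : Run E T ok a m b n)
    (hb : ok b n) : ∃ q π, q m = a ∧ IsSegmentation E T ok q π m n b := by
  obtain ⟨l, c, hl, hhead, hlast, hok, ⟨rfl, hnm⟩ | ⟨d, ht, hd⟩⟩ := h.exists_isChain_head hb
  · refine ⟨fun _ => a, fun _ => l, rfl, fun i hmi hin => ?_, fun i _ _ => by omega, hlast⟩
    obtain rfl : i = m := by omega
    exact ⟨hl, hhead, hok⟩
  · have hmn : m < n := hd.le
    obtain ⟨q, π, hq, hπ, hT, hlast'⟩ := hd.exists_isSegmentation hb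
    refine ⟨Function.update q m a, Function.update π m l, by simp, fun i hmi hin => ?_,
      fun i hmi hin => ?_, by simpa [hmn.ne'] using hlast'⟩
    · rcases hmi.eq_or_lt with rfl | hlt
      · simpa using ⟨hl, hhead, hok⟩
      · simpa [hlt.ne'] using hπ i hlt hin
    · rcases hmi.eq_or_lt with rfl | hlt
      · simpa [hq] using ⟨c, hlast, ht⟩
      · rw [Function.update_of_ne hlt.ne', Function.update_of_ne (by omega)]
        exact hT i hlt hin
termination_by n - m
decreasing_by omega

end Run

theorem tMark_eq_none_of_tFinal {r : RE P V} {q : TState P V r} (h : tFinal r q) :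
    tMark r q = none := by
  induction q with
  | compR s ih => exact ih h
  | testInit | plusL | plusR | compL | starIn => simp [tFinal] at h
  | _ => rfl

section Thompson

variable (w : ℕ → P → Prop) (c : ℕ → Prop) (α : V → ℕ)

def MarksHold (r : RE P V) (q : TState P V r) (m : ℕ) : Prop :=
  ∀ ψ ∈ tMark r q, Sat w c α ψ m

abbrev TRun (r : RE P V) : TState P V r → ℕ → TState P V r → ℕ → Prop :=
  Run (tEps r) (fun q m q' => tStep r q (w m) q') (MarksHold w c α r)

def Accepts (r : RE P V) (m n : ℕ) : Prop :=
  ∃ qf, tFinal r qf ∧ TRun w c α r (tInit r) m qf n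

/-- ε-moves of the copy of `A_r` inside `A_{r*}`, including the jumps back to the start. -/
def loopEps (r : RE P V) (s s' : TState P V r) : Prop :=
  tEps r s s' ∨ (tFinal r s ∧ s' = tInit r)

abbrev LoopRun (r : RE P V) : TState P V r → ℕ → TState P V r → ℕ → Prop :=
  Run (loopEps r) (fun q m q' => tStep r q (w m) q') (MarksHold w c α r)

variable {w c α}

theorem marksHold_of_tMark_eq_none {r : RE P V} {q : TState P V r} {m : ℕ}
    (h : tMark r q = none) : MarksHold w c α r q m := by
  simp [MarksHold, h]

theorem marksHold_of_tFinal {r : RE P V} {q : TState P V r} {m : ℕ} (h : tFinal r q) :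
    MarksHold w c α r q m :=
  marksHold_of_tMark_eq_none (tMark_eq_none_of_tFinal h)

theorem accepts_prop_iff {φ : PropF P} {m n : ℕ} :
    Accepts w c α (.prop φ) m n ↔ n = m + 1 ∧ φ.eval (w m) := by
  constructor
  · rintro ⟨qf, hf, h | ⟨he⟩ | @⟨_, q', _, _, _, ⟨rfl, hφ⟩, _, h⟩⟩
    · simp [tFinal, tInit] at hf
    · exact he.elim
    · obtain ⟨rfl, rfl⟩ := h.eq_of_stuck (fun _ h => h) (fun _ h => h)
      exact ⟨rfl, hφ⟩
  · rintro ⟨rfl, hφ⟩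
    exact ⟨.propFin φ, trivial, .step ⟨rfl, hφ⟩ (marksHold_of_tMark_eq_none rfl) (.refl _ _)⟩

theorem accepts_test_iff {ψ : Frm P V} {m n : ℕ} :
    Accepts w c α (.test ψ) m n ↔ n = m ∧ Sat w c α ψ m := by
  constructor
  · rintro ⟨qf, hf, h | @⟨_, q', _, _, _, rfl, hψ, h⟩ | ⟨ht⟩⟩
    · simp [tFinal, tInit] at hf
    · obtain ⟨rfl, rfl⟩ := h.eq_of_stuck (fun _ h => h) (fun _ h => h)
      exact ⟨rfl, hψ ψ rfl⟩
    · exact ht.elim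
  · rintro ⟨rfl, hψ⟩
    refine ⟨.testFin ψ, trivial, .eps rfl ?_ (.refl _ _)⟩
    rintro _ ⟨⟩
    exact hψ

theorem accepts_plus_iff {r₀ r₁ : RE P V} {m n : ℕ} :
    Accepts w c α (.plus r₀ r₁) m n ↔ Accepts w c α r₀ m n ∨ Accepts w c α r₁ m n := by
  constructor
  · rintro ⟨qf, hf, h | @⟨_, q', _, _, _, he, -, h⟩ | ⟨ht⟩⟩
    · simp [tFinal, tInit] at hf
    · rcases he with rfl | rfl
      · have key : (∃ s', qf = .plusL s' ∧ TRun w c α r₀ (tInit r₀) m s' n) ∨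
            ∃ s', TRun w c α r₀ (tInit r₀) m s' n ∧ tFinal r₀ s' ∧ qf = .plusFin r₀ r₁ :=
          Run.exit_of_map_of_stuck TState.plusL (fun s y => tFinal r₀ s ∧ y = .plusFin r₀ r₁)
            (fun {s y} he => by cases y <;> simp_all [tEps])
            (fun {s m y} ht => by cases y <;> simp_all [tStep]) id
            (by rintro s x ⟨-, rfl⟩; exact ⟨fun _ h => h, fun _ _ h => h⟩) h
        rcases key with ⟨s', rfl, -⟩ | ⟨s', h₀, hs', rfl⟩
        · simp [tFinal] at hf
        · exact .inl ⟨s', hs', h₀⟩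
      · have key : (∃ s', qf = .plusR s' ∧ TRun w c α r₁ (tInit r₁) m s' n) ∨
            ∃ s', TRun w c α r₁ (tInit r₁) m s' n ∧ tFinal r₁ s' ∧ qf = .plusFin r₀ r₁ :=
          Run.exit_of_map_of_stuck TState.plusR (fun s y => tFinal r₁ s ∧ y = .plusFin r₀ r₁)
            (fun {s y} he => by cases y <;> simp_all [tEps])
            (fun {s m y} ht => by cases y <;> simp_all [tStep]) id
            (by rintro s x ⟨-, rfl⟩; exact ⟨fun _ h => h, fun _ _ h => h⟩) h
        rcases key with ⟨s', rfl, -⟩ | ⟨s', h₁, hs', rfl⟩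
        · simp [tFinal] at hf
        · exact .inr ⟨s', hs', h₁⟩
    · exact ht.elim
  · rintro (⟨qf, hf, h⟩ | ⟨qf, hf, h⟩)
    · have hexit : TRun w c α (.plus r₀ r₁) (.plusL qf) n (.plusFin r₀ r₁) n :=
        .eps (q' := TState.plusFin r₀ r₁) hf
          (marksHold_of_tMark_eq_none (tMark_eq_none_of_tFinal (r := r₀) hf)) (.refl _ _)
      exact ⟨.plusFin r₀ r₁, trivial, .eps (.inl rfl) (marksHold_of_tMark_eq_none rfl)
        ((h.map TState.plusL id id id).trans hexit)⟩
    · have hexit : TRun w c α (.plus r₀ r₁) (.plusR qf) n (.plusFin r₀ r₁) n :=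
        .eps (q' := TState.plusFin r₀ r₁) hf
          (marksHold_of_tMark_eq_none (tMark_eq_none_of_tFinal (r := r₁) hf)) (.refl _ _)
      exact ⟨.plusFin r₀ r₁, trivial, .eps (.inr rfl) (marksHold_of_tMark_eq_none rfl)
        ((h.map TState.plusR id id id).trans hexit)⟩

theorem accepts_comp_iff {r₀ r₁ : RE P V} {m n : ℕ} :
    Accepts w c α (.comp r₀ r₁) m n ↔ ∃ k, Accepts w c α r₀ m k ∧ Accepts w c α r₁ k n := by
  constructor
  · rintro ⟨qf, hf, h⟩
    have key : (∃ s', qf = .compL s' ∧ TRun w c α r₀ (tInit r₀) m s' n) ∨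
        ∃ s' x k, TRun w c α r₀ (tInit r₀) m s' k ∧ (tFinal r₀ s' ∧ x = .compR (tInit r₁)) ∧
          TRun w c α (.comp r₀ r₁) x k qf n :=
      Run.exit_of_map TState.compL _ (fun {s y} he => by cases y <;> simp_all [tEps])
        (fun {s m y} ht => by cases y <;> simp_all [tStep]) id h
    rcases key with ⟨s', rfl, -⟩ | ⟨s₀, _, k, h₀, ⟨hs₀, rfl⟩, h⟩
    · simp [tFinal] at hf
    have key : ∃ s', qf = .compR s' ∧ TRun w c α r₁ (tInit r₁) k s' n :=
      Run.of_map TState.compR (fun {s y} he => by cases y <;> simp_all [tEps])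
        (fun {s m y} ht => by cases y <;> simp_all [tStep]) id h
    obtain ⟨s₁, rfl, h₁⟩ := key
    exact ⟨k, ⟨s₀, hs₀, h₀⟩, ⟨s₁, hf, h₁⟩⟩
  · rintro ⟨k, ⟨s₀, hs₀, h₀⟩, ⟨s₁, hs₁, h₁⟩⟩
    have hswitch : TRun w c α (.comp r₀ r₁) (.compL s₀) k (.compR (tInit r₁)) k :=
      .eps (q' := TState.compR (tInit r₁)) ⟨hs₀, rfl⟩
        (marksHold_of_tMark_eq_none (tMark_eq_none_of_tFinal (r := r₀) hs₀)) (.refl _ _)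
    exact ⟨.compR s₁, hs₁,
      ((h₀.map TState.compL id id id).trans hswitch).trans (h₁.map TState.compR id id id)⟩

theorem LoopRun.exists_reflTransGen {r : RE P V} {s s' : TState P V r} {m n : ℕ}
    (h : LoopRun w c α r s m s' n) (hs' : tFinal r s') :
    ∃ f k, TRun w c α r s m f k ∧ tFinal r f ∧ Relation.ReflTransGen (Accepts w c α r) k n := by
  induction h with
  | refl q m => exact ⟨q, m, .refl _ _, hs', .refl⟩
  | eps he ho _ ih =>
    obtain ⟨f, k, hrun, hf, hk⟩ := ih hs'
    rcases he with he | ⟨hs, rfl⟩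
    · exact ⟨f, k, .eps he ho hrun, hf, hk⟩
    · exact ⟨_, _, .refl _ _, hs, .head ⟨f, hf, hrun⟩ hk⟩
  | step ht ho _ ih =>
    obtain ⟨f, k, hrun, hf, hk⟩ := ih hs'
    exact ⟨f, k, .step ht ho hrun, hf, hk⟩

theorem tRun_starIn_of_reflTransGen {r : RE P V} {m n : ℕ}
    (h : Relation.ReflTransGen (Accepts w c α r) m n) {s : TState P V r} (hs : tFinal r s) :
    TRun w c α (.star r) (.starIn s) m (.starFin r) n := by
  induction h using Relation.ReflTransGen.head_induction_on generalizing s with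
  | refl =>
    exact .eps (q' := TState.starFin r) hs
      (marksHold_of_tMark_eq_none (tMark_eq_none_of_tFinal (r := r) hs)) (.refl _ _)
  | head hmk _ ih =>
    obtain ⟨f, hf, hrun⟩ := hmk
    exact .eps (q' := TState.starIn (tInit r)) (.inr ⟨hs, rfl⟩)
      (marksHold_of_tMark_eq_none (tMark_eq_none_of_tFinal (r := r) hs))
      ((hrun.map TState.starIn .inl id id).trans (ih hf))

theorem accepts_star_iff {r : RE P V} {m n : ℕ} :
    Accepts w c α (.star r) m n ↔ Relation.ReflTransGen (Accepts w c α r) m n := by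
  constructor
  · rintro ⟨qf, hf, h | @⟨_, q', _, _, _, he, -, h⟩ | ⟨ht⟩⟩
    · simp [tFinal, tInit] at hf
    · rcases he with rfl | rfl
      · obtain ⟨-, rfl⟩ := h.eq_of_stuck (fun _ h => h) (fun _ h => h)
        exact .refl
      · have key : (∃ s', qf = .starIn s' ∧ LoopRun w c α r (tInit r) m s' n) ∨
            ∃ s', LoopRun w c α r (tInit r) m s' n ∧ tFinal r s' ∧ qf = .starFin r :=
          Run.exit_of_map_of_stuck TState.starIn (fun s y => tFinal r s ∧ y = .starFin r)
            (fun {s y} he => by cases y <;> simp_all [tEps, loopEps])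
            (fun {s m y} ht => by cases y <;> simp_all [tStep]) id
            (by rintro s x ⟨-, rfl⟩; exact ⟨fun _ h => h, fun _ _ h => h⟩) h
        rcases key with ⟨s', rfl, -⟩ | ⟨s', hloop, hs', rfl⟩
        · simp [tFinal] at hf
        · obtain ⟨f, k, hrun, hf, hk⟩ := hloop.exists_reflTransGen hs'
          exact .head ⟨f, hf, hrun⟩ hk
    · exact ht.elim
  · intro h
    rcases h.cases_head with rfl | ⟨k, ⟨f, hf, hrun⟩, hk⟩
    · exact ⟨.starFin r, trivial, .eps (.inl rfl) (marksHold_of_tMark_eq_none rfl) (.refl _ _)⟩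
    · exact ⟨.starFin r, trivial, .eps (.inr rfl) (marksHold_of_tMark_eq_none rfl)
        ((hrun.map TState.starIn .inl id id).trans (tRun_starIn_of_reflTransGen hk hf))⟩

theorem accepts_iff_match : (r : RE P V) → (m n : ℕ) →
    (Accepts w c α r m n ↔ Match w c α r m n)
  | .prop _, _, _ => accepts_prop_iff
  | .test _, _, _ => accepts_test_iff
  | .plus r₀ r₁, m, n => by
    rw [accepts_plus_iff, accepts_iff_match r₀, accepts_iff_match r₁, Match]
  | .comp r₀ r₁, m, n => by
    simp only [accepts_comp_iff, accepts_iff_match r₀, accepts_iff_match r₁, Match]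
  | .star r, m, n => by
    simp only [accepts_star_iff, accepts_iff_match r, Match, reflTransGen_iff_exists_seq]

end Thompson

/-- correctness of the marked ε-NFA `A_r`. The automaton has an
accepting run `q₀ ⋯ q_n` on `w₀ ⋯ w_{n-1}` (each step an ε-path `π_i` from
`q_i` followed by a `w_i`-transition to `q_{i+1}`, and a final ε-path `π_n`
from `q_n` into a final state) such that every test marking visited along
`π_i` is satisfied by the suffix `w_i w_{i+1} ⋯`, if and only if
`(0, n) ∈ R(r, w)`. -/
theorem thompson_correct (r : RE P V)
    (w : ℕ → P → Prop) (c : ℕ → Prop) (α : V → ℕ) (n : ℕ) :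
    (∃ (q : ℕ → TState P V r) (π : ℕ → List (TState P V r)),
      q 0 = tInit r ∧
      (∀ i, i ≤ n → TEpsPath r (π i) ∧ (π i).head? = some (q i)) ∧
      (∀ i, i < n → ∃ q', (π i).getLast? = some q' ∧
        tStep r q' (w i) (q (i + 1))) ∧
      (∃ qf, (π n).getLast? = some qf ∧ tFinal r qf) ∧
      (∀ i, i ≤ n → ∀ ψ ∈ (π i).filterMap (tMark r), Sat w c α ψ i)) ↔
    Match w c α r 0 n := by
  rw [← accepts_iff_match]
  constructor
  · rintro ⟨q, π, hq0, hpath, hstep, ⟨qf, hlast, hf⟩, hmarks⟩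
    have hseg : IsSegmentation (tEps r) (fun q m q' => tStep r q (w m) q') (MarksHold w c α r)
        q π 0 n qf :=
      ⟨fun i _ hi => ⟨(hpath i hi).1.2, (hpath i hi).2, List.forall_mem_filterMap.1 (hmarks i hi)⟩,
        fun i _ hi => hstep i hi, hlast⟩
    exact ⟨qf, hf, hq0 ▸ hseg.run (Nat.zero_le n)⟩
  · rintro ⟨qf, hf, hrun⟩
    obtain ⟨q, π, hq0, hπ, hstep, hlast⟩ := hrun.exists_isSegmentation (marksHold_of_tFinal hf)
    refine ⟨q, π, hq0, fun i hi => ?_, fun i => hstep i (Nat.zero_le i), ⟨qf, hlast, hf⟩,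
      fun i hi => List.forall_mem_filterMap.2 (hπ i (Nat.zero_le i) hi).2.2⟩
    obtain ⟨hchain, hhead, -⟩ := hπ i (Nat.zero_le i) hi
    exact ⟨⟨by rintro h; simp [h] at hhead, hchain⟩, hhead⟩

end PLDLPaper
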